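/- (Chain lower bound on mutual information) For any discrete random variables X₁,…,Xₙ with finite support, I(X₁;Xₙ) ≥ ∑_{i=1}^{n−1} I(Xᵢ;X_{i+1}) − ∑_{i=2}^{n−1} H(Xᵢ). -/

import Mathlib

open Finset

noncomputable def pmfOf {Ω : Type*} [Fintype Ω] {α : Type*} [Fintype α] [DecidableEq α]
    (μ : Ω → ℝ) (X : Ω → α) (a : α) : ℝ :=
  ∑ ω, if X ω = a then μ ω else 0

noncomputable def entropy {Ω : Type*} [Fintype Ω] {α : Type*} [Fintype α] [DecidableEq α]
    (μ : Ω → ℝ) (X : Ω → α) : ℝ :=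
  -∑ a, pmfOf μ X a * Real.log (pmfOf μ X a)

section helpers
variable {Ω : Type*} [Fintype Ω] {α : Type*} [Fintype α] [DecidableEq α]
  {β : Type*} [Fintype β] [DecidableEq β] {μ : Ω → ℝ}

lemma pmfOf_nonneg (hμ : ∀ ω, 0 ≤ μ ω) (X : Ω → α) (a : α) : 0 ≤ pmfOf μ X a := by
  apply Finset.sum_nonneg
  intro ω _
  split
  exacts [hμ ω, le_refl 0]

lemma le_pmfOf_apply (hμ : ∀ ω, 0 ≤ μ ω) (X : Ω → α) (ω : Ω) :
    μ ω ≤ pmfOf μ X (X ω) := by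
  have := Finset.single_le_sum (f := fun ω' => if X ω' = X ω then μ ω' else 0)
    (fun ω' _ => by split; exacts [hμ ω', le_refl 0]) (Finset.mem_univ ω)
  simpa [pmfOf] using this

lemma pmfOf_apply_pos (hμ : ∀ ω, 0 ≤ μ ω) (X : Ω → α) {ω : Ω} (h : 0 < μ ω) :
    0 < pmfOf μ X (X ω) :=
  lt_of_lt_of_le h (le_pmfOf_apply hμ X ω)

lemma pmfOf_le_comp (hμ : ∀ ω, 0 ≤ μ ω) (X : Ω → α) (f : α → β) (ω : Ω) :
    pmfOf μ X (X ω) ≤ pmfOf μ (fun ω' => f (X ω')) (f (X ω)) := by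
  apply Finset.sum_le_sum
  intro ω' _
  by_cases h : X ω' = X ω
  · simp [h]
  · simp only [if_neg h]
    split
    exacts [hμ ω', le_refl 0]

lemma pmfOf_comp_inj {g : α → β} (hg : Function.Injective g) (X : Ω → α) (a : α) :
    pmfOf μ (fun ω => g (X ω)) (g a) = pmfOf μ X a := by
  unfold pmfOf
  apply Finset.sum_congr rfl
  intro ω _
  simp [hg.eq_iff]

lemma sum_pmfOf (X : Ω → α) : ∑ a, pmfOf μ X a = ∑ ω, μ ω := by
  unfold pmfOf
  rw [Finset.sum_comm]
  apply Finset.sum_congr rfl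
  intro ω _
  simp

lemma pmfOf_le_total (hμ : ∀ ω, 0 ≤ μ ω) (X : Ω → α) (a : α) :
    pmfOf μ X a ≤ ∑ ω, μ ω := by
  apply Finset.sum_le_sum
  intro ω _
  split
  exacts [le_refl _, hμ ω]

lemma sum_pmf_mul (X : Ω → α) (g : α → ℝ) :
    ∑ a, pmfOf μ X a * g a = ∑ ω, μ ω * g (X ω) := by
  unfold pmfOf
  simp only [Finset.sum_mul]
  rw [Finset.sum_comm]
  apply Finset.sum_congr rfl
  intro ω _
  simp only [ite_mul, zero_mul]
  rw [Finset.sum_ite_eq univ (X ω) (fun a => μ ω * g a)]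
  simp

lemma entropy_eq (X : Ω → α) :
    entropy μ X = -∑ ω, μ ω * Real.log (pmfOf μ X (X ω)) := by
  rw [entropy, sum_pmf_mul X (fun a => Real.log (pmfOf μ X a))]

end helpers
noncomputable def mutualInfo {Ω : Type*} [Fintype Ω] {α β : Type*}
    [Fintype α] [DecidableEq α] [Fintype β] [DecidableEq β]
    (μ : Ω → ℝ) (X : Ω → α) (Y : Ω → β) : ℝ :=
  ∑ a, ∑ b, pmfOf μ (fun ω => (X ω, Y ω)) (a, b) *
    Real.log (pmfOf μ (fun ω => (X ω, Y ω)) (a, b) / (pmfOf μ X a * pmfOf μ Y b))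

section core
variable {Ω : Type*} [Fintype Ω] {α : Type*} [Fintype α] [DecidableEq α]
  {β : Type*} [Fintype β] [DecidableEq β]
  {γ : Type*} [Fintype γ] [DecidableEq γ] {μ : Ω → ℝ}

lemma pmfOf_exists_pos (hμ : ∀ ω, 0 ≤ μ ω) {X : Ω → α} {a : α}
    (h : pmfOf μ X a ≠ 0) : ∃ ω, X ω = a ∧ 0 < μ ω := by
  obtain ⟨ω, -, hω⟩ := Finset.exists_ne_zero_of_sum_ne_zero h
  by_cases hx : X ω = a
  · exact ⟨ω, hx, lt_of_le_of_ne (hμ ω) (by simp [hx] at hω; exact fun e => hω e.symm)⟩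
  · simp [hx] at hω

lemma klBound {ι : Type*} (s : Finset ι) (p q : ι → ℝ)
    (hp : ∀ i ∈ s, 0 ≤ p i) (hq : ∀ i ∈ s, 0 ≤ q i)
    (himp : ∀ i ∈ s, q i = 0 → p i = 0)
    (hle : ∑ i ∈ s, q i ≤ ∑ i ∈ s, p i) :
    0 ≤ ∑ i ∈ s, p i * Real.log (p i / q i) := by
  have key : ∀ i ∈ s, p i - q i ≤ p i * Real.log (p i / q i) := by
    intro i hi
    rcases eq_or_lt_of_le (hp i hi) with h0 | h0
    · simp [← h0]
      exact hq i hi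
    · have hq0 : 0 < q i := by
        rcases eq_or_lt_of_le (hq i hi) with e | e
        · exact absurd (himp i hi e.symm) (ne_of_gt h0)
        · exact e
      have hlog := Real.log_le_sub_one_of_pos (div_pos hq0 h0)
      have hrw : Real.log (p i / q i) = - Real.log (q i / p i) := by
        rw [← Real.log_inv]
        congr 1
        field_simp
      rw [hrw]
      have h2 : q i / p i - 1 = (q i - p i) / p i := by field_simp
      rw [h2] at hlog
      have := mul_le_mul_of_nonneg_left hlog (le_of_lt h0)
      rw [mul_div_cancel₀ _ (ne_of_gt h0)] at this
      linarith
  calc (0:ℝ) = ∑ i ∈ s, p i - ∑ i ∈ s, q i + ∑ i ∈ s, q i - ∑ i ∈ s, p i := by ring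
  _ ≤ ∑ i ∈ s, p i * Real.log (p i / q i) + ∑ i ∈ s, q i - ∑ i ∈ s, p i := by
      have := Finset.sum_le_sum key
      rw [Finset.sum_sub_distrib] at this
      linarith
  _ ≤ _ := by linarith

lemma mutualInfo_omega (μ : Ω → ℝ) (X : Ω → α) (Y : Ω → β) :
    mutualInfo μ X Y = ∑ ω, μ ω *
      Real.log (pmfOf μ (fun ω' => (X ω', Y ω')) (X ω, Y ω) /
        (pmfOf μ X (X ω) * pmfOf μ Y (Y ω))) := by
  have := sum_pmf_mul (μ := μ) (fun ω => (X ω, Y ω))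
    (fun c => Real.log (pmfOf μ (fun ω' => (X ω', Y ω')) c / (pmfOf μ X c.1 * pmfOf μ Y c.2)))
  rw [Fintype.sum_prod_type] at this
  rw [mutualInfo]
  exact this

lemma mutualInfo_eq (hμ : ∀ ω, 0 ≤ μ ω) (X : Ω → α) (Y : Ω → β) :
    mutualInfo μ X Y = entropy μ X + entropy μ Y - entropy μ (fun ω => (X ω, Y ω)) := by
  have h : mutualInfo μ X Y = ∑ ω, (μ ω * Real.log (pmfOf μ (fun ω' => (X ω', Y ω')) (X ω, Y ω))
      - μ ω * Real.log (pmfOf μ X (X ω)) - μ ω * Real.log (pmfOf μ Y (Y ω))) := by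
    rw [mutualInfo_omega]
    apply Finset.sum_congr rfl
    intro ω _
    rcases eq_or_lt_of_le (hμ ω) with h0 | h0
    · simp [← h0]
    · have h1 : 0 < pmfOf μ (fun ω' => (X ω', Y ω')) (X ω, Y ω) :=
        pmfOf_apply_pos hμ (fun ω' => (X ω', Y ω')) h0
      have h2 : 0 < pmfOf μ X (X ω) := pmfOf_apply_pos hμ X h0
      have h3 : 0 < pmfOf μ Y (Y ω) := pmfOf_apply_pos hμ Y h0
      rw [Real.log_div (ne_of_gt h1) (by positivity), Real.log_mul (ne_of_gt h2) (ne_of_gt h3)]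
      ring
  rw [h, entropy_eq, entropy_eq, entropy_eq]
  rw [Finset.sum_sub_distrib, Finset.sum_sub_distrib]
  ring

lemma entropy_comp_le (hμ : ∀ ω, 0 ≤ μ ω) (X : Ω → α) (f : α → β) :
    entropy μ (fun ω => f (X ω)) ≤ entropy μ X := by
  rw [entropy_eq, entropy_eq, neg_le_neg_iff]
  apply Finset.sum_le_sum
  intro ω _
  rcases eq_or_lt_of_le (hμ ω) with h0 | h0
  · simp [← h0]
  · apply mul_le_mul_of_nonneg_left _ (hμ ω)
    exact Real.log_le_log (pmfOf_apply_pos hμ X h0) (pmfOf_le_comp hμ X f ω)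

lemma entropy_comp_inj {g : α → β} (hg : Function.Injective g) (X : Ω → α) :
    entropy μ (fun ω => g (X ω)) = entropy μ X := by
  rw [entropy_eq, entropy_eq]
  congr 1
  apply Finset.sum_congr rfl
  intro ω _
  rw [pmfOf_comp_inj hg]

lemma entropy_nonneg (hμ : ∀ ω, 0 ≤ μ ω) (hsum : ∑ ω, μ ω = 1) (X : Ω → α) :
    0 ≤ entropy μ X := by
  rw [entropy_eq, neg_nonneg]
  apply Finset.sum_nonpos
  intro ω _
  rcases eq_or_lt_of_le (hμ ω) with h0 | h0
  · simp [← h0]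
  · apply mul_nonpos_of_nonneg_of_nonpos (hμ ω)
    apply Real.log_nonpos (le_of_lt (pmfOf_apply_pos hμ X h0))
    rw [← hsum]
    exact pmfOf_le_total hμ X _

end core
section submod
variable {Ω : Type*} [Fintype Ω] {α : Type*} [Fintype α] [DecidableEq α]
  {β : Type*} [Fintype β] [DecidableEq β]
  {γ : Type*} [Fintype γ] [DecidableEq γ] {μ : Ω → ℝ}

lemma pmfOf_pair_sum_fst (A : Ω → α) (B : Ω → β) (b : β) :
    ∑ a, pmfOf μ (fun ω => (A ω, B ω)) (a, b) = pmfOf μ B b := by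
  unfold pmfOf
  rw [Finset.sum_comm]
  apply Finset.sum_congr rfl
  intro ω _
  by_cases h : B ω = b
  · simp [Prod.ext_iff, h]
  · simp [Prod.ext_iff, h]

lemma pmfOf_pair_sum_snd (A : Ω → α) (B : Ω → β) (a : α) :
    ∑ b, pmfOf μ (fun ω => (A ω, B ω)) (a, b) = pmfOf μ A a := by
  unfold pmfOf
  rw [Finset.sum_comm]
  apply Finset.sum_congr rfl
  intro ω _
  by_cases h : A ω = a
  · simp [Prod.ext_iff, h]
  · simp [Prod.ext_iff, h]

lemma entropy_submodular (hμ : ∀ ω, 0 ≤ μ ω) (A : Ω → α) (B : Ω → β) (C : Ω → γ) :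
    entropy μ (fun ω => (A ω, B ω, C ω)) + entropy μ B ≤
      entropy μ (fun ω => (A ω, B ω)) + entropy μ (fun ω => (B ω, C ω)) := by
  set p : α × β × γ → ℝ := pmfOf μ (fun ω => (A ω, B ω, C ω)) with hp
  set pAB : α × β → ℝ := pmfOf μ (fun ω => (A ω, B ω)) with hpAB
  set pBC : β × γ → ℝ := pmfOf μ (fun ω => (B ω, C ω)) with hpBC
  set pB : β → ℝ := pmfOf μ B with hpB
  set q : α × β × γ → ℝ := fun x => pAB (x.1, x.2.1) * pBC (x.2.1, x.2.2) / pB x.2.1 with hq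
  -- sum of q is at most sum of p
  have hqle : ∑ x, q x ≤ ∑ x, p x := by
    have h1 : ∑ x, q x = ∑ b, pB b * pB b / pB b := by
      simp only [Fintype.sum_prod_type]
      rw [Finset.sum_comm]
      apply Finset.sum_congr rfl
      intro b _
      have inner : ∀ a, ∑ c, q (a, b, c) = pAB (a, b) * pB b / pB b := by
        intro a
        simp only [hq]
        rw [← Finset.sum_div, ← Finset.mul_sum]
        congr 2
        exact pmfOf_pair_sum_snd B C b
      calc ∑ a, ∑ c, q (a, b, c) = ∑ a, pAB (a, b) * pB b / pB b := by
            exact Finset.sum_congr rfl fun a _ => inner a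
        _ = pB b * pB b / pB b := by
            rw [← Finset.sum_div, ← Finset.sum_mul, pmfOf_pair_sum_fst A B b]
    rw [h1]
    have h2 : ∑ x, p x = ∑ b, pB b := by
      rw [hp, sum_pmfOf, hpB, sum_pmfOf]
    rw [h2]
    apply Finset.sum_le_sum
    intro b _
    by_cases h : pB b = 0
    · simp [h]
    · rw [mul_div_assoc, div_self h, mul_one]
  -- positivity facts
  have hppos : ∀ x, 0 ≤ p x := fun x => pmfOf_nonneg hμ _ x
  have hqpos : ∀ x, 0 ≤ q x := by
    intro x
    apply div_nonneg (mul_nonneg (pmfOf_nonneg hμ _ _) (pmfOf_nonneg hμ _ _))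
      (pmfOf_nonneg hμ _ _)
  have himp : ∀ x, q x = 0 → p x = 0 := by
    intro x hx
    by_contra hne
    obtain ⟨ω, hω, hpos⟩ := pmfOf_exists_pos hμ hne
    have e1 : A ω = x.1 := by rw [← hω]
    have e2 : B ω = x.2.1 := by rw [← hω]
    have e3 : C ω = x.2.2 := by rw [← hω]
    have h1 : 0 < pAB (x.1, x.2.1) := by
      rw [← e1, ← e2]; exact pmfOf_apply_pos hμ (fun ω => (A ω, B ω)) hpos
    have h2 : 0 < pBC (x.2.1, x.2.2) := by
      rw [← e2, ← e3]; exact pmfOf_apply_pos hμ (fun ω => (B ω, C ω)) hpos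
    have h3 : 0 < pB x.2.1 := by
      rw [← e2]; exact pmfOf_apply_pos hμ B hpos
    have : 0 < q x := div_pos (mul_pos h1 h2) h3
    rw [hx] at this
    exact lt_irrefl 0 this
  have hkl : 0 ≤ ∑ x, p x * Real.log (p x / q x) :=
    klBound Finset.univ p q (fun x _ => hppos x) (fun x _ => hqpos x)
      (fun x _ => himp x) hqle
  -- rewrite the KL sum in ω form
  have homega : ∑ x, p x * Real.log (p x / q x) =
      ∑ ω, μ ω * Real.log (p (A ω, B ω, C ω) / q (A ω, B ω, C ω)) :=
    sum_pmf_mul (fun ω => (A ω, B ω, C ω)) (fun x => Real.log (p x / q x))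
  have hsplit : ∑ ω, μ ω * Real.log (p (A ω, B ω, C ω) / q (A ω, B ω, C ω)) =
      ∑ ω, (μ ω * Real.log (p (A ω, B ω, C ω)) + μ ω * Real.log (pB (B ω))
        - μ ω * Real.log (pAB (A ω, B ω)) - μ ω * Real.log (pBC (B ω, C ω))) := by
    apply Finset.sum_congr rfl
    intro ω _
    rcases eq_or_lt_of_le (hμ ω) with h0 | h0
    · simp [← h0]
    · have h1 : 0 < p (A ω, B ω, C ω) := pmfOf_apply_pos hμ (fun ω => (A ω, B ω, C ω)) h0
      have h2 : 0 < pAB (A ω, B ω) := pmfOf_apply_pos hμ (fun ω => (A ω, B ω)) h0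
      have h3 : 0 < pBC (B ω, C ω) := pmfOf_apply_pos hμ (fun ω => (B ω, C ω)) h0
      have h4 : 0 < pB (B ω) := pmfOf_apply_pos hμ B h0
      have hqe : q (A ω, B ω, C ω) = pAB (A ω, B ω) * pBC (B ω, C ω) / pB (B ω) := rfl
      rw [hqe, div_div_eq_mul_div, Real.log_div (by positivity) (by positivity),
        Real.log_mul (ne_of_gt h1) (ne_of_gt h4), Real.log_mul (ne_of_gt h2) (ne_of_gt h3)]
      ring
  have hABC : entropy μ (fun ω => (A ω, B ω, C ω)) =
      -∑ ω, μ ω * Real.log (p (A ω, B ω, C ω)) := entropy_eq _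
  have hAB : entropy μ (fun ω => (A ω, B ω)) =
      -∑ ω, μ ω * Real.log (pAB (A ω, B ω)) := entropy_eq _
  have hBC : entropy μ (fun ω => (B ω, C ω)) =
      -∑ ω, μ ω * Real.log (pBC (B ω, C ω)) := entropy_eq _
  have hB : entropy μ B = -∑ ω, μ ω * Real.log (pB (B ω)) := entropy_eq _
  rw [homega, hsplit] at hkl
  simp only [Finset.sum_sub_distrib, Finset.sum_add_distrib] at hkl
  rw [hABC, hAB, hBC, hB]
  linarith

end submod
section chain
variable {Ω : Type*} [Fintype Ω] {α : Type*} [Fintype α] [DecidableEq α] {μ : Ω → ℝ}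

lemma chain_entropy (hμ : ∀ ω, 0 ≤ μ ω) (X : ℕ → Ω → α) (k : ℕ) (hk : 2 ≤ k) :
    entropy μ (fun ω (j : Fin k) => X (j.val + 1) ω) +
      ∑ i ∈ Finset.Icc 2 (k - 1), entropy μ (X i) ≤
    ∑ i ∈ Finset.Icc 1 (k - 1), entropy μ (fun ω => (X i ω, X (i + 1) ω)) := by
  induction k, hk using Nat.le_induction with
  | base =>
    have h1 : Finset.Icc 2 (2 - 1) = (∅ : Finset ℕ) := by decide
    have h2 : Finset.Icc 1 (2 - 1) = ({1} : Finset ℕ) := by decide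
    rw [h1, h2]
    simp only [Finset.sum_empty, Finset.sum_singleton, add_zero]
    set g : α × α → (Fin 2 → α) := fun p j => if j.val = 0 then p.1 else p.2 with hg
    have hginj : Function.Injective g := by
      intro p q h
      have h0 := congrFun h 0
      have h1 := congrFun h 1
      simp [hg] at h0 h1
      exact Prod.ext h0 h1
    have hfun : (fun ω (j : Fin 2) => X (j.val + 1) ω) = fun ω => g (X 1 ω, X 2 ω) := by
      funext ω j
      rcases j with ⟨jv, hj⟩
      interval_cases jv <;> simp [hg]
    rw [hfun, entropy_comp_inj hginj]
  | succ k hk ih =>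
    -- notation
    set W : Ω → (Fin k → α) := fun ω j => X (j.val + 1) ω with hW
    have hk1 : k - 1 + 1 = k := by omega
    -- Step inequality
    have sub := entropy_submodular hμ W (X k) (X (k + 1))
    have eqA : entropy μ (fun ω => (W ω, X k ω)) = entropy μ W := by
      set g1 : (Fin k → α) → (Fin k → α) × α := fun v => (v, v ⟨k - 1, by omega⟩) with hg1
      have hinj : Function.Injective g1 := fun u v h => congrArg Prod.fst h
      have hfun : (fun ω => (W ω, X k ω)) = fun ω => g1 (W ω) := by
        funext ω
        simp only [hg1, hW, Prod.mk.injEq, true_and]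
        congr 1
        omega
      rw [hfun, entropy_comp_inj hinj]
    have eqB : entropy μ (fun ω => (W ω, X k ω, X (k + 1) ω)) =
        entropy μ (fun ω (j : Fin (k + 1)) => X (j.val + 1) ω) := by
      set g2 : (Fin (k + 1) → α) → (Fin k → α) × α × α :=
        fun v => (fun j => v j.castSucc, v ⟨k - 1, by omega⟩, v ⟨k, by omega⟩) with hg2
      have hinj : Function.Injective g2 := by
        intro u v h
        have h1 : (fun j : Fin k => u j.castSucc) = fun j : Fin k => v j.castSucc :=
          congrArg Prod.fst h
        have h3 : u ⟨k, by omega⟩ = v ⟨k, by omega⟩ := congrArg (fun x => x.2.2) h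
        funext j
        by_cases hj : j.val < k
        · have := congrFun h1 ⟨j.val, hj⟩
          have hcast : (Fin.castSucc ⟨j.val, hj⟩ : Fin (k + 1)) = j := by
            apply Fin.ext
            simp
          rwa [hcast] at this
        · have hjk : j = ⟨k, by omega⟩ := by
            apply Fin.ext
            simp only []
            omega
          rw [hjk]
          exact h3
      have hfun : (fun ω => (W ω, X k ω, X (k + 1) ω)) =
          fun ω => g2 (fun j : Fin (k + 1) => X (j.val + 1) ω) := by
        funext ω
        refine Prod.ext rfl (Prod.ext ?_ rfl)
        show X k ω = X (k - 1 + 1) ω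
        rw [hk1]
      rw [hfun]
      exact entropy_comp_inj hinj (fun ω (j : Fin (k + 1)) => X (j.val + 1) ω)
    rw [eqA, eqB] at sub
    -- sum decompositions
    have e1 : ∑ i ∈ Finset.Icc 2 (k + 1 - 1), entropy μ (X i) =
        (∑ i ∈ Finset.Icc 2 (k - 1), entropy μ (X i)) + entropy μ (X k) := by
      have : k + 1 - 1 = k - 1 + 1 := by omega
      rw [this, Finset.sum_Icc_succ_top (by omega), hk1]
    have e2 : ∑ i ∈ Finset.Icc 1 (k + 1 - 1), entropy μ (fun ω => (X i ω, X (i + 1) ω)) =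
        (∑ i ∈ Finset.Icc 1 (k - 1), entropy μ (fun ω => (X i ω, X (i + 1) ω))) +
          entropy μ (fun ω => (X k ω, X (k + 1) ω)) := by
      have : k + 1 - 1 = k - 1 + 1 := by omega
      rw [this, Finset.sum_Icc_succ_top (by omega), hk1]
    rw [e1, e2]
    linarith

end chain
theorem chain_lower_bound_mutualInfo
    {Ω : Type*} [Fintype Ω] {α : Type*} [Fintype α] [DecidableEq α]
    (μ : Ω → ℝ) (hμ : ∀ ω, 0 ≤ μ ω) (hsum : ∑ ω, μ ω = 1)
    (n : ℕ) (hn : 1 ≤ n) (X : ℕ → Ω → α) :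
    (∑ i ∈ Finset.Icc 1 (n - 1), mutualInfo μ (X i) (X (i + 1))) -
        ∑ i ∈ Finset.Icc 2 (n - 1), entropy μ (X i) ≤
      mutualInfo μ (X 1) (X n) := by
  rcases eq_or_lt_of_le hn with h1 | h2
  · -- n = 1
    subst h1
    have e1 : Finset.Icc 1 (1 - 1) = (∅ : Finset ℕ) := by decide
    have e2 : Finset.Icc 2 (1 - 1) = (∅ : Finset ℕ) := by decide
    rw [e1, e2]
    simp only [Finset.sum_empty, sub_zero]
    rw [mutualInfo_eq hμ]
    have hdiag : entropy μ (fun ω => (X 1 ω, X 1 ω)) = entropy μ (X 1) :=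
      entropy_comp_inj (g := fun x : α => (x, x))
        (fun a b h => (Prod.ext_iff.mp h).1) (X 1)
    rw [hdiag]
    have := entropy_nonneg hμ hsum (X 1)
    linarith
  · -- n ≥ 2
    have hn2 : 2 ≤ n := h2
    set W : Ω → (Fin n → α) := fun ω (j : Fin n) => X (j.val + 1) ω with hW
    have key := chain_entropy hμ X n hn2
    rw [← hW] at key
    -- monotonicity
    have mono : entropy μ (fun ω => (X 1 ω, X n ω)) ≤ entropy μ W := by
      set f : (Fin n → α) → α × α := fun v => (v ⟨0, by omega⟩, v ⟨n - 1, by omega⟩) with hf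
      have h0 := entropy_comp_le hμ W f
      have hfun : (fun ω => (X 1 ω, X n ω)) = fun ω => f (W ω) := by
        funext ω
        refine Prod.ext rfl ?_
        show X n ω = X (n - 1 + 1) ω
        congr 1
        omega
      rw [hfun]
      exact h0
    -- rewrite mutual informations
    have hIsum : ∑ i ∈ Finset.Icc 1 (n - 1), mutualInfo μ (X i) (X (i + 1)) =
        (∑ i ∈ Finset.Icc 1 (n - 1), entropy μ (X i)) +
        (∑ i ∈ Finset.Icc 1 (n - 1), entropy μ (X (i + 1))) -
        ∑ i ∈ Finset.Icc 1 (n - 1), entropy μ (fun ω => (X i ω, X (i + 1) ω)) := by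
      rw [← Finset.sum_add_distrib, ← Finset.sum_sub_distrib]
      apply Finset.sum_congr rfl
      intro i _
      rw [mutualInfo_eq hμ]
    have hshift : ∑ i ∈ Finset.Icc 1 (n - 1), entropy μ (X (i + 1)) =
        ∑ i ∈ Finset.Icc 2 n, entropy μ (X i) := by
      have hmap : Finset.Icc 2 n = Finset.map (addRightEmbedding 1) (Finset.Icc 1 (n - 1)) := by
        rw [Finset.map_add_right_Icc]
        congr 1
        omega
      rw [hmap, Finset.sum_map]
      apply Finset.sum_congr rfl
      intro i _
      rfl
    have hsplit1 : ∑ i ∈ Finset.Icc 1 (n - 1), entropy μ (X i) =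
        entropy μ (X 1) + ∑ i ∈ Finset.Icc 2 (n - 1), entropy μ (X i) := by
      have hins : Finset.Icc 1 (n - 1) = insert 1 (Finset.Icc 2 (n - 1)) := by
        ext x
        simp only [Finset.mem_Icc, Finset.mem_insert]
        omega
      rw [hins, Finset.sum_insert (by simp)]
    have hsplit2 : ∑ i ∈ Finset.Icc 2 n, entropy μ (X i) =
        (∑ i ∈ Finset.Icc 2 (n - 1), entropy μ (X i)) + entropy μ (X n) := by
      have : n = n - 1 + 1 := by omega
      rw [this, Finset.sum_Icc_succ_top (by omega)]
      rw [← this]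
    rw [hIsum, hshift, hsplit1, hsplit2, mutualInfo_eq hμ]
    linarith
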